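/- Let r, r' ∈ ℝ^{4,2} be lightlike with ⟨r,p⟩ = ⟨r',p⟩ = 1 and ⟨r,r'⟩ ≠ 0 (adjacent spheres of a discrete Ribaucour sphere congruence). Let f⁺, f⁻, f'⁺, f'⁻ be 2-dimensional totally isotropic subspaces with r ∈ f⁺ ∩ f⁻, r' ∈ f'⁺ ∩ f'⁻, f⁺ ∩ f'⁺ ≠ {0} and f⁻ ∩ f'⁻ ≠ {0} (adjacent contact elements of two envelopes f^± of the congruence). For ε ∈ {+,−} let q^ε ∈ f^ε and q'^ε ∈ f'^ε be nonzero vectors orthogonal to p (these exist and are unique up to scale, since ⟨r,p⟩ ≠ 0 and ⟨r',p⟩ ≠ 0). Set a := r' − r. Then ⟨a,a⟩ = −2⟨r,r'⟩ ≠ 0, ⟨a,p⟩ = 0, so σ_a is an M-Lie inversion, and σ_a maps span{q'⁺, q'⁻, r' + p} onto span{q⁺, q⁻, r + p}; in particular σ_a(r' + p) = r + p, σ_a(q'^ε) ∈ span{q^ε}, and σ_a(p) = p. (Theorem: the circles intersecting the spheres of a Ribaucour sphere congruence orthogonally in the point spheres of two envelopes form a circle congruence in which adjacent circles are exchanged by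 M-Lie inversions; this congruence is cyclic.) -/

import Mathlib

/-!
With `a = r' - r`, the Lie inversion `σ_a` is the reflection of `ℝ^{4,2}` exchanging the isotropic
vectors `r` and `r'` and fixing `a^⊥`, which contains `p` and the common line `w` of the adjacent
contact elements `f ∋ r` and `f' ∋ r'`. Hence `σ_a` carries `f' = span {r', w}` into `f`, and, since
it preserves `⟨·, p⟩`, the line of `f'` orthogonal to `p` (spanned by `q'`) into that of `f`
(spanned by `q`). Applying this with the roles of `r` and `r'` exchanged, and using that `σ_a` is an
involution, gives the image of the whole circle.
-/

noncomputable section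

/-- The vector space ℝ^{4,2}, modeled as `Fin 6 → ℝ`. -/
abbrev R42 : Type := Fin 6 → ℝ

/-- The symmetric bilinear form of signature (4,2) on ℝ^{4,2}. -/
def bform : R42 →ₗ[ℝ] R42 →ₗ[ℝ] ℝ :=
  LinearMap.mk₂ ℝ
    (fun x y => x 0 * y 0 + x 1 * y 1 + x 2 * y 2 + x 3 * y 3 - x 4 * y 4 - x 5 * y 5)
    (fun x x' y => by simp only [Pi.add_apply]; ring)
    (fun c x y => by simp only [Pi.smul_apply, smul_eq_mul]; ring)
    (fun x y y' => by simp only [Pi.add_apply]; ring)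
    (fun c x y => by simp only [Pi.smul_apply, smul_eq_mul]; ring)

/-- A lightlike vector: nonzero and isotropic. Represents an oriented 2-sphere. -/
def IsLightlike (v : R42) : Prop := v ≠ 0 ∧ bform v v = 0

/-- The Lie inversion with respect to the linear sphere complex determined by `a`. -/
def lieInv (a r : R42) : R42 := r - (2 * bform r a / bform a a) • a

open Module

theorem Submodule.eq_span_pair_of_finrank_eq_two {K V : Type*} [Field K] [AddCommGroup V]
    [Module K V] {f : Submodule K V} (hf : finrank K f = 2) {u v : V} (hu : u ∈ f) (hv : v ∈ f)
    (huv : LinearIndependent K ![u, v]) : f = span K {u, v} := by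
  have : FiniteDimensional K f := Module.finite_of_finrank_pos (by omega)
  refine (eq_of_le_of_finrank_eq (span_le.mpr ?_) ?_).symm
  · simp [Set.insert_subset_iff, hu, hv]
  · rw [hf, ← Matrix.range_cons_cons_empty, finrank_span_eq_card huv, Fintype.card_fin]

theorem Submodule.mem_span_singleton_of_apply_eq_zero {K V : Type*} [Field K] [AddCommGroup V]
    [Module K V] {f : Submodule K V} (hf : finrank K f = 2) (φ : Dual K V) {r q x : V}
    (hr : r ∈ f) (hφr : φ r ≠ 0) (hq : q ∈ f) (hq0 : q ≠ 0) (hφq : φ q = 0)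
    (hx : x ∈ f) (hφx : φ x = 0) : x ∈ span K {q} := by
  have hqr : LinearIndependent K ![q, r] :=
    (LinearIndependent.pair_iff' hq0).mpr fun c hc => hφr (by simp [← hc, hφq])
  obtain ⟨s, t, rfl⟩ := mem_span_pair.mp (eq_span_pair_of_finrank_eq_two hf hq hr hqr ▸ hx)
  have ht : t = 0 := by simpa [hφq, hφr] using hφx
  simpa [ht] using smul_mem _ s (mem_span_singleton_self q)

theorem Submodule.map_eq_of_involutive {K V : Type*} [Semiring K] [AddCommMonoid V] [Module K V]
    {L : V →ₗ[K] V} (hL : Function.Involutive L) {S T : Submodule K V} (hST : S.map L ≤ T)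
    (hTS : T.map L ≤ S) : S.map L = T :=
  le_antisymm hST fun x hx => ⟨L x, hTS ⟨x, hx, rfl⟩, hL x⟩

theorem Submodule.map_span_triple_le {K V : Type*} [Semiring K] [AddCommMonoid V] [Module K V]
    {L : V →ₗ[K] V} {x y z x' y' z' : V} (hx : L x ∈ span K {x'}) (hy : L y ∈ span K {y'})
    (hz : L z = z') : (span K {x, y, z}).map L ≤ span K {x', y', z'} := by
  simp only [map_span_le, Set.mem_insert_iff, Set.mem_singleton_iff, forall_eq_or_imp, forall_eq]
  exact ⟨span_mono (by simp) hx, span_mono (by simp) hy, hz ▸ subset_span (by simp)⟩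

theorem bform_comm (x y : R42) : bform x y = bform y x := by
  simp only [bform, LinearMap.mk₂_apply]; ring

theorem bform_sub_sub_of_isotropic {r r' : R42} (hr : bform r r = 0) (hr' : bform r' r' = 0) :
    bform (r' - r) (r' - r) = -2 * bform r r' := by
  simp only [map_sub, LinearMap.sub_apply, hr, hr', bform_comm r' r]; ring

def lieInvₗ (a : R42) : R42 →ₗ[ℝ] R42 where
  toFun := lieInv a
  map_add' x y := by
    simp only [lieInv, map_add, LinearMap.add_apply, mul_add, add_div, add_smul]; abel
  map_smul' c x := by
    simp only [lieInv, map_smul, LinearMap.smul_apply, smul_eq_mul, RingHom.id_apply, smul_sub,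
      smul_smul]
    ring_nf

theorem lieInv_add (a x y : R42) : lieInv a (x + y) = lieInv a x + lieInv a y :=
  (lieInvₗ a).map_add x y

theorem lieInv_smul (a : R42) (c : ℝ) (x : R42) : lieInv a (c • x) = c • lieInv a x :=
  (lieInvₗ a).map_smul c x

theorem lieInv_neg (a : R42) : lieInv (-a) = lieInv a := by
  funext x
  simp only [lieInv, map_neg, LinearMap.neg_apply, mul_neg, neg_neg, neg_div, neg_smul_neg]

theorem lieInv_of_bform_eq_zero {a x : R42} (h : bform x a = 0) : lieInv a x = x := by
  simp [lieInv, h]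

theorem lieInv_involutive {a : R42} (ha : bform a a ≠ 0) : Function.Involutive (lieInv a) := by
  intro x
  have hσa : bform (lieInv a x) a = -bform x a := by
    simp only [lieInv, map_sub, map_smul, LinearMap.sub_apply, LinearMap.smul_apply, smul_eq_mul]
    field_simp
    ring
  rw [lieInv, hσa, lieInv]
  module

theorem lieInv_sub_self {r r' : R42} (hr : bform r r = 0) (hr' : bform r' r' = 0)
    (hrr' : bform r r' ≠ 0) : lieInv (r' - r) r' = r := by
  have hcoef : 2 * bform r' (r' - r) / bform (r' - r) (r' - r) = 1 := by
    rw [bform_sub_sub_of_isotropic hr hr', div_eq_one_iff_eq (by simpa using hrr')]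
    simp only [map_sub, hr', bform_comm r' r]; ring
  rw [lieInv, hcoef, one_smul, sub_sub_cancel]

variable {f f' : Submodule ℝ R42}

theorem lieInv_sub_mem_of_inf_ne_bot (hf : ∀ u ∈ f, ∀ v ∈ f, bform u v = 0)
    (hf' : ∀ u ∈ f', ∀ v ∈ f', bform u v = 0) (hf'2 : finrank ℝ f' = 2) {r r' q' : R42}
    (hr : r ∈ f) (hr' : r' ∈ f') (hrr' : bform r r' ≠ 0) (hff' : f ⊓ f' ≠ ⊥) (hq' : q' ∈ f') :
    lieInv (r' - r) q' ∈ f := by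
  obtain ⟨w, hw, hw0⟩ := (Submodule.ne_bot_iff _).mp hff'
  obtain ⟨hwf, hwf'⟩ := Submodule.mem_inf.mp hw
  have hσw : lieInv (r' - r) w = w := lieInv_of_bform_eq_zero <| by
    simp [hf w hwf r hr, hf' w hwf' r' hr']
  have hσr' : lieInv (r' - r) r' = r := lieInv_sub_self (hf r hr r hr) (hf' r' hr' r' hr') hrr'
  have hr'w : LinearIndependent ℝ ![r', w] := by
    refine (LinearIndependent.pair_iff' fun h => hrr' (by simp [h])).mpr fun c hc => hw0 ?_
    have hc0 : c = 0 := by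
      simpa [← hc, hrr'] using hf r hr w hwf
    rw [← hc, hc0, zero_smul]
  obtain ⟨s, t, rfl⟩ := Submodule.mem_span_pair.mp
    (Submodule.eq_span_pair_of_finrank_eq_two hf'2 hr' hwf' hr'w ▸ hq')
  rw [lieInv_add, lieInv_smul, lieInv_smul, hσr', hσw]
  exact f.add_mem (f.smul_mem s hr) (f.smul_mem t hwf)

theorem lieInv_sub_mem_span_singleton
    (hf : finrank ℝ f = 2 ∧ ∀ u ∈ f, ∀ v ∈ f, bform u v = 0)
    (hf' : finrank ℝ f' = 2 ∧ ∀ u ∈ f', ∀ v ∈ f', bform u v = 0) {p r r' q q' : R42}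
    (hr : r ∈ f) (hr' : r' ∈ f') (hrp : bform r p ≠ 0) (hr'p : bform r' p = bform r p)
    (hrr' : bform r r' ≠ 0) (hff' : f ⊓ f' ≠ ⊥)
    (hq : q ∈ f ∧ q ≠ 0 ∧ bform q p = 0) (hq' : q' ∈ f' ∧ bform q' p = 0) :
    lieInv (r' - r) q' ∈ Submodule.span ℝ {q} := by
  refine Submodule.mem_span_singleton_of_apply_eq_zero hf.1 (bform.flip p) hr hrp hq.1 hq.2.1
    hq.2.2 (lieInv_sub_mem_of_inf_ne_bot hf.2 hf'.2 hf'.1 hr hr' hrr' hff' hq'.1) ?_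
  simp [lieInv, hr'p, hq'.2]

theorem stmt_10_general (p r r' : R42)
    (hr : IsLightlike r) (hr' : IsLightlike r')
    (hrp : bform r p = 1) (hr'p : bform r' p = 1) (hrr' : bform r r' ≠ 0)
    (fP fM fP' fM' : Submodule ℝ R42)
    (hfP : Module.finrank ℝ fP = 2 ∧ ∀ u ∈ fP, ∀ v ∈ fP, bform u v = 0)
    (hfM : Module.finrank ℝ fM = 2 ∧ ∀ u ∈ fM, ∀ v ∈ fM, bform u v = 0)
    (hfP' : Module.finrank ℝ fP' = 2 ∧ ∀ u ∈ fP', ∀ v ∈ fP', bform u v = 0)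
    (hfM' : Module.finrank ℝ fM' = 2 ∧ ∀ u ∈ fM', ∀ v ∈ fM', bform u v = 0)
    (hrfP : r ∈ fP) (hrfM : r ∈ fM) (hr'fP' : r' ∈ fP') (hr'fM' : r' ∈ fM')
    (hintP : fP ⊓ fP' ≠ ⊥) (hintM : fM ⊓ fM' ≠ ⊥)
    (qP qM qP' qM' : R42)
    (hqP : qP ∈ fP ∧ qP ≠ 0 ∧ bform qP p = 0)
    (hqM : qM ∈ fM ∧ qM ≠ 0 ∧ bform qM p = 0)
    (hqP' : qP' ∈ fP' ∧ qP' ≠ 0 ∧ bform qP' p = 0)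
    (hqM' : qM' ∈ fM' ∧ qM' ≠ 0 ∧ bform qM' p = 0)
    (a : R42) (ha : a = r' - r) :
    bform a a = -2 * bform r r' ∧ bform a a ≠ 0 ∧ bform a p = 0 ∧
    lieInv a '' ((Submodule.span ℝ ({qP', qM', r' + p} : Set R42) : Submodule ℝ R42) : Set R42) =
      ((Submodule.span ℝ ({qP, qM, r + p} : Set R42) : Submodule ℝ R42) : Set R42) ∧
    lieInv a (r' + p) = r + p ∧
    lieInv a qP' ∈ Submodule.span ℝ ({qP} : Set R42) ∧
    lieInv a qM' ∈ Submodule.span ℝ ({qM} : Set R42) ∧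
    lieInv a p = p := by
  subst ha
  have haa := bform_sub_sub_of_isotropic hr.2 hr'.2
  have haa0 : bform (r' - r) (r' - r) ≠ 0 := haa ▸ mul_ne_zero (by norm_num) hrr'
  have hap : bform (r' - r) p = 0 := by simp [hrp, hr'p]
  have hσp : lieInv (r' - r) p = p := lieInv_of_bform_eq_zero (by rw [bform_comm, hap])
  have hσr'p : lieInv (r' - r) (r' + p) = r + p := by
    rw [lieInv_add, lieInv_sub_self hr.2 hr'.2 hrr', hσp]
  have hσrp : lieInv (r' - r) (r + p) = r' + p := by rw [← hσr'p, lieInv_involutive haa0]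
  have hrp0 : bform r p ≠ 0 := by simp [hrp]
  have hr'p0 : bform r' p ≠ 0 := by simp [hr'p]
  have hP := lieInv_sub_mem_span_singleton hfP hfP' hrfP hr'fP' hrp0 (hr'p.trans hrp.symm) hrr'
    hintP hqP ⟨hqP'.1, hqP'.2.2⟩
  have hM := lieInv_sub_mem_span_singleton hfM hfM' hrfM hr'fM' hrp0 (hr'p.trans hrp.symm) hrr'
    hintM hqM ⟨hqM'.1, hqM'.2.2⟩
  have hσ_symm : lieInv (r - r') = lieInv (r' - r) := by rw [← lieInv_neg, neg_sub]
  have hP' := hσ_symm ▸ lieInv_sub_mem_span_singleton hfP' hfP hr'fP' hrfP hr'p0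
    (hrp.trans hr'p.symm) (bform_comm r r' ▸ hrr') (inf_comm fP fP' ▸ hintP) hqP' ⟨hqP.1, hqP.2.2⟩
  have hM' := hσ_symm ▸ lieInv_sub_mem_span_singleton hfM' hfM hr'fM' hrfM hr'p0
    (hrp.trans hr'p.symm) (bform_comm r r' ▸ hrr') (inf_comm fM fM' ▸ hintM) hqM' ⟨hqM.1, hqM.2.2⟩
  refine ⟨haa, haa0, hap, ?_, hσr'p, hP, hM, hσp⟩
  change ⇑(lieInvₗ (r' - r)) '' _ = _
  rw [← Submodule.map_coe, Submodule.map_eq_of_involutive (lieInv_involutive haa0)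
    (Submodule.map_span_triple_le hP hM hσr'p) (Submodule.map_span_triple_le hP' hM' hσrp)]

/-- For adjacent spheres `r`, `r'` of a discrete Ribaucour sphere
congruence with envelopes given by adjacent contact elements `f^±`, `f'^±` and point
sphere maps `q^±`, `q'^±`, the M-Lie inversion `σ_a` with `a = r' − r` maps the circle
`span {q'⁺, q'⁻, r' + p}` onto the circle `span {q⁺, q⁻, r + p}`. -/
theorem stmt_10 (p r r' : R42)
    (hp : bform p p = -1)
    (hr : IsLightlike r) (hr' : IsLightlike r')
    (hrp : bform r p = 1) (hr'p : bform r' p = 1) (hrr' : bform r r' ≠ 0)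
    (fP fM fP' fM' : Submodule ℝ R42)
    (hfP : Module.finrank ℝ fP = 2 ∧ ∀ u ∈ fP, ∀ v ∈ fP, bform u v = 0)
    (hfM : Module.finrank ℝ fM = 2 ∧ ∀ u ∈ fM, ∀ v ∈ fM, bform u v = 0)
    (hfP' : Module.finrank ℝ fP' = 2 ∧ ∀ u ∈ fP', ∀ v ∈ fP', bform u v = 0)
    (hfM' : Module.finrank ℝ fM' = 2 ∧ ∀ u ∈ fM', ∀ v ∈ fM', bform u v = 0)
    (hrfP : r ∈ fP) (hrfM : r ∈ fM) (hr'fP' : r' ∈ fP') (hr'fM' : r' ∈ fM')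
    (hintP : fP ⊓ fP' ≠ ⊥) (hintM : fM ⊓ fM' ≠ ⊥)
    (qP qM qP' qM' : R42)
    (hqP : qP ∈ fP ∧ qP ≠ 0 ∧ bform qP p = 0)
    (hqM : qM ∈ fM ∧ qM ≠ 0 ∧ bform qM p = 0)
    (hqP' : qP' ∈ fP' ∧ qP' ≠ 0 ∧ bform qP' p = 0)
    (hqM' : qM' ∈ fM' ∧ qM' ≠ 0 ∧ bform qM' p = 0)
    (a : R42) (ha : a = r' - r) :
    bform a a = -2 * bform r r' ∧ bform a a ≠ 0 ∧ bform a p = 0 ∧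
    lieInv a '' ((Submodule.span ℝ ({qP', qM', r' + p} : Set R42) : Submodule ℝ R42) : Set R42) =
      ((Submodule.span ℝ ({qP, qM, r + p} : Set R42) : Submodule ℝ R42) : Set R42) ∧
    lieInv a (r' + p) = r + p ∧
    lieInv a qP' ∈ Submodule.span ℝ ({qP} : Set R42) ∧
    lieInv a qM' ∈ Submodule.span ℝ ({qM} : Set R42) ∧
    lieInv a p = p :=
  stmt_10_general p r r' hr hr' hrp hr'p hrr' fP fM fP' fM' hfP hfM hfP' hfM' hrfP hrfM hr'fP'
    hr'fM' hintP hintM qP qM qP' qM' hqP hqM hqP' hqM' a ha
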